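/- Let G, H be groupoids, X : Hᵒᵖ × G ⥤ Type an (H,G)-bi-set, and η₀ an object of H. There is a bijection between the colimit in Type of the G-set X(η₀, -) : G ⥤ Type and the set of connected components of the homotopy fiber over η₀ of the projection q : GXH ⥤ H from the double translation groupoid. -/

import Mathlib

/-!
The colimit of `X(η₀, -)` is the set of connected components of its category of elements.
Sending `(γ, x)` to `((γ, x, η₀), 𝟙)` maps the elements into the homotopy fiber of `q` over `η₀`,
and restricting along the structure map sends `((γ, x, η), h)` back to `(γ, x • h)`, carrying
morphisms to morphisms. The first round trip is the identity up to `x • 𝟙 = x`, and the second is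
connected to the identity by the fiber morphism `(𝟙, h) : ((γ, x • h, η₀), 𝟙) ⟶ ((γ, x, η), h)`,
so both maps induce inverse bijections on connected components.
-/

open CategoryTheory Opposite

universe w v₁ v₂ u₁ u₂

variable {G : Type u₁} {H : Type u₂} [Groupoid.{v₁} G] [Groupoid.{v₂} H]

namespace BiSet

variable (X : Hᵒᵖ × G ⥤ Type w)

/-- The left action `x ↦ g • x` of a bi-set `X : Hᵒᵖ × G ⥤ Type`. -/
def lAct {γ γ' : G} (g : γ ⟶ γ') (η : H) : X.obj (op η, γ) → X.obj (op η, γ') :=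
  X.map ((𝟙 (op η), g) : (op η, γ) ⟶ (op η, γ'))

/-- The right action `x ↦ x • h` of a bi-set `X : Hᵒᵖ × G ⥤ Type`. -/
def rAct {η' η : H} (h : η' ⟶ η) (γ : G) : X.obj (op η, γ) → X.obj (op η', γ) :=
  X.map ((h.op, 𝟙 γ) : (op η, γ) ⟶ (op η', γ))

variable {X}

theorem lAct_id {γ : G} (η : H) (x : X.obj (op η, γ)) : lAct X (𝟙 γ) η x = x := by
  exact Functor.map_id_apply X (op η, γ) x

theorem rAct_id {η : H} (γ : G) (x : X.obj (op η, γ)) : rAct X (𝟙 η) γ x = x := by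
  exact Functor.map_id_apply X (op η, γ) x

theorem lAct_comp {γ γ' γ'' : G} (g : γ ⟶ γ') (g' : γ' ⟶ γ'') (η : H)
    (x : X.obj (op η, γ)) : lAct X (g ≫ g') η x = lAct X g' η (lAct X g η x) := by
  unfold lAct
  rw [← Functor.map_comp_apply]
  congr 2; rw [prod_comp]; simp only [Category.id_comp]

theorem rAct_comp {η η' η'' : H} (h : η ⟶ η') (h' : η' ⟶ η'') (γ : G)
    (x : X.obj (op η'', γ)) : rAct X (h ≫ h') γ x = rAct X h γ (rAct X h' γ x) := by
  unfold rAct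
  rw [← Functor.map_comp_apply]
  congr 2; rw [prod_comp]; simp only [Category.id_comp, op_comp]

theorem lAct_rAct {γ γ' : G} {η' η : H} (g : γ ⟶ γ') (h : η' ⟶ η) (x : X.obj (op η, γ)) :
    lAct X g η' (rAct X h γ x) = rAct X h γ' (lAct X g η x) := by
  unfold lAct rAct
  rw [← Functor.map_comp_apply, ← Functor.map_comp_apply]
  congr 2; rw [prod_comp]; simp

end BiSet

/-- Objects of the double translation groupoid `GXH` of a bi-set `X : Hᵒᵖ × G ⥤ Type`:
triples `(γ, x, η)` with `x ∈ X(η, γ)`. -/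
structure DoubleTranslation (X : Hᵒᵖ × G ⥤ Type w) where
  γ : G
  η : H
  x : X.obj (op η, γ)

namespace DoubleTranslation

variable {X : Hᵒᵖ × G ⥤ Type w}

/-- The double translation groupoid: morphisms `a ⟶ b` are pairs `(g, h)` with
`g : a.γ ⟶ b.γ`, `h : a.η ⟶ b.η` and `g • a.x = b.x • h`. -/
instance : Category (DoubleTranslation X) where
  Hom a b := {p : (a.γ ⟶ b.γ) × (a.η ⟶ b.η) //
      BiSet.lAct X p.1 a.η a.x = BiSet.rAct X p.2 b.γ b.x}
  id a := ⟨(𝟙 a.γ, 𝟙 a.η), by rw [BiSet.lAct_id, BiSet.rAct_id]⟩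
  comp {a b c} f g := ⟨(f.1.1 ≫ g.1.1, f.1.2 ≫ g.1.2), by
    rw [BiSet.lAct_comp, f.2, BiSet.lAct_rAct, g.2, ← BiSet.rAct_comp]⟩
  id_comp f := by apply Subtype.ext; dsimp; simp
  comp_id f := by apply Subtype.ext; dsimp; simp
  assoc f g h := by apply Subtype.ext; dsimp; simp

/-- The projection `q : GXH ⥤ H` of the double translation groupoid. -/
def toH (X : Hᵒᵖ × G ⥤ Type w) : DoubleTranslation X ⥤ H where
  obj a := a.η
  map f := f.1.2
  map_id _ := rfl
  map_comp _ _ := rfl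

end DoubleTranslation

/-- The relation on `Σ c, T c` whose quotient is the colimit of `T` in `Type`. -/
def ColimRel {C : Type u} [Category.{v} C] (T : C ⥤ Type w) :
    (Σ c : C, T.obj c) → (Σ c : C, T.obj c) → Prop :=
  fun x y => ∃ g : x.1 ⟶ y.1, T.map g x.2 = y.2


section ConnectedComponents

variable {C : Type*} {D : Type*} [Category* C] [Category* D]

theorem CategoryTheory.Zigzag.eq_of_preserves_morphisms {α : Sort*} (f : C → α)
    (hf : ∀ {c c' : C}, (c ⟶ c') → f c = f c') {c c' : C} (h : Zigzag c c') : f c = f c' := by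
  induction h with
  | refl => rfl
  | tail _ hzag ih =>
    rcases hzag with ⟨⟨g⟩⟩ | ⟨⟨g⟩⟩
    · exact ih.trans (hf g)
    · exact ih.trans (hf g).symm

def CategoryTheory.Prefunctor.connectedComponentsEquiv (F : C ⥤q D) (G : D ⥤q C)
    (unit : ∀ c, c ⟶ G.obj (F.obj c)) (counit : ∀ d, F.obj (G.obj d) ⟶ d) :
    ConnectedComponents C ≃ ConnectedComponents D where
  toFun := Quot.lift (fun c => Quot.mk _ (F.obj c)) fun _ _ h =>
    Quot.sound (zigzag_prefunctor_obj_of_zigzag F h)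
  invFun := Quot.lift (fun d => Quot.mk _ (G.obj d)) fun _ _ h =>
    Quot.sound (zigzag_prefunctor_obj_of_zigzag G h)
  left_inv := Quot.ind fun c => Quot.sound (Zigzag.of_hom (unit c)).symm
  right_inv := Quot.ind fun d => Quot.sound (Zigzag.of_hom (counit d))

def CategoryTheory.Functor.quotColimRelEquivConnectedComponents (T : C ⥤ Type*) :
    Quot (ColimRel T) ≃ ConnectedComponents T.Elements where
  toFun := Quot.lift (Quot.mk _) fun x y ⟨g, hg⟩ =>
    Quot.sound (Zigzag.of_hom (CategoryOfElements.homMk x y g hg))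
  invFun := Quot.lift (Quot.mk _) fun _ _ =>
    Zigzag.eq_of_preserves_morphisms (C := T.Elements) (Quot.mk (ColimRel T)) fun f =>
      Quot.sound ⟨_, CategoryOfElements.map_snd f⟩
  left_inv := Quot.ind fun _ => rfl
  right_inv := Quot.ind fun _ => rfl

end ConnectedComponents

namespace DoubleTranslation

variable {X : Hᵒᵖ × G ⥤ Type w}

theorem lAct_rAct_eq_rAct_comp {a b : DoubleTranslation X} (f : a ⟶ b) {η : H} (h : η ⟶ a.η) :
    BiSet.lAct X f.1.1 η (BiSet.rAct X h a.γ a.x) = BiSet.rAct X (h ≫ f.1.2) b.γ b.x := by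
  rw [BiSet.lAct_rAct, f.2, BiSet.rAct_comp]

variable (X) (η₀ : H)

def elementsToFiber :
    ((Functor.curry.obj X).obj (op η₀)).Elements ⥤q StructuredArrow η₀ (toH X) where
  obj p := StructuredArrow.mk (Y := (⟨p.1, η₀, p.2⟩ : DoubleTranslation X)) (𝟙 η₀)
  map f := StructuredArrow.homMk ⟨(f.1, 𝟙 η₀), f.2.trans (BiSet.rAct_id _ _).symm⟩
    (Category.comp_id _)

def fiberToElements :
    StructuredArrow η₀ (toH X) ⥤q ((Functor.curry.obj X).obj (op η₀)).Elements where
  obj s := ⟨s.right.γ, BiSet.rAct X s.hom s.right.γ s.right.x⟩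
  map {s t} f := ⟨f.right.1.1, (lAct_rAct_eq_rAct_comp f.right s.hom).trans
    (congrArg (BiSet.rAct X · t.right.γ t.right.x) (StructuredArrow.w f))⟩

end DoubleTranslation

/-- The colimit in `Type` of the `G`-set `X(η₀, -)` is in bijection with the set of connected
components of the homotopy fiber over `η₀` of the projection `q : GXH ⥤ H` from the double
translation groupoid. -/
theorem colimit_equiv_connectedComponents_homotopyFiber (X : Hᵒᵖ × G ⥤ Type w) (η₀ : H) :
    Nonempty (Quot (ColimRel ((Functor.curry.obj X).obj (op η₀))) ≃
      ConnectedComponents (StructuredArrow η₀ (DoubleTranslation.toH X))) := by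
  refine ⟨(Functor.quotColimRelEquivConnectedComponents _).trans
    (Prefunctor.connectedComponentsEquiv (DoubleTranslation.elementsToFiber X η₀)
      (DoubleTranslation.fiberToElements X η₀) ?unit ?counit)⟩
  case unit => exact fun p => ⟨𝟙 p.1, (BiSet.lAct_id η₀ p.2).trans (BiSet.rAct_id p.1 p.2).symm⟩
  case counit => exact fun s =>
    StructuredArrow.homMk ⟨(𝟙 s.right.γ, s.hom), BiSet.lAct_id _ _⟩ (Category.id_comp _)
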